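/- Let A ∈ Mₙ(ℂ) be positive definite Hermitian and h : (0,∞) → (0,∞). Define h̃(λ) = λ·h(1/λ) and h*(λ) = 1/h(1/λ). Then the following are equivalent: (i) for every T ∈ Mₙ(ℂ), TᴴT ≤ I and TᴴAT ≤ A imply Tᴴh(A)T ≤ h(A); (ii) for every T ∈ Mₙ(ℂ), TᴴT ≤ I and TᴴA⁻¹T ≤ A⁻¹ imply Tᴴh̃(A⁻¹)T ≤ h̃(A⁻¹); (iii) for every T ∈ Mₙ(ℂ), TᴴT ≤ I and TᴴA⁻¹T ≤ A⁻¹ imply Tᴴh*(A⁻¹)T ≤ h*(A⁻¹). -/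

import Mathlib

/-!
Call `G` exact interpolation for the couple `(B₀, B₁)` if every `T` with `T* B₀ T ≤ B₀` and
`T* B₁ T ≤ B₁` satisfies `T* G T ≤ G`; condition (i) says this for `(1, A, h(A))`. The notion is
symmetric in `B₀, B₁` and invariant under congruence `X ↦ U* X U` (substitute `U T U⁻¹`), so
congruence by `A^{-1/2}` carries `(1, A, h(A))` to `(A⁻¹, 1, h̃(A⁻¹))`, giving (i) ⟺ (ii). By Schur
complements, `T* M T ≤ M ⟺ T M⁻¹ T* ≤ M⁻¹` for `M > 0`, so substituting `T*` shows that the notion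
passes to inverses; this carries `(1, A, h(A))` to `(1, A⁻¹, h*(A⁻¹))`, giving (i) ⟺ (iii).
-/

open Matrix MeasureTheory
open scoped ComplexOrder

/-- Loewner order on complex `n × n` matrices: `LoewnerLE A B` iff `B - A` is
positive semidefinite (i.e. `A ≤ B`). -/
def LoewnerLE {n : ℕ} (A B : Matrix (Fin n) (Fin n) ℂ) : Prop := (B - A).PosSemidef

/-- Functional calculus for Hermitian matrices: apply `h : ℝ → ℝ` to each eigenvalue
in a spectral decomposition of `A` (junk value `0` for non-Hermitian input). -/
noncomputable def matFunCalc {n : ℕ} (h : ℝ → ℝ) (A : Matrix (Fin n) (Fin n) ℂ) :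
    Matrix (Fin n) (Fin n) ℂ :=
  if hA : A.IsHermitian then
    (hA.eigenvectorUnitary : Matrix (Fin n) (Fin n) ℂ) *
      diagonal (fun i => (h (hA.eigenvalues i) : ℂ)) *
      star (hA.eigenvectorUnitary : Matrix (Fin n) (Fin n) ℂ)
  else 0

section StarOrderedRing

variable {R : Type*} [Ring R] [PartialOrder R] [StarRing R]

theorem IsUnit.star_left_conjugate_le_conjugate_iff [StarOrderedRing R] {u a b : R}
    (hu : IsUnit u) :
    star u * a * u ≤ star u * b * u ↔ a ≤ b := by
  rw [← sub_nonneg, ← sub_mul, ← mul_sub, hu.star_left_conjugate_nonneg_iff, sub_nonneg]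

def IsExactInterpolation (B₀ B₁ G : R) : Prop :=
  ∀ T : R, star T * B₀ * T ≤ B₀ → star T * B₁ * T ≤ B₁ → star T * G * T ≤ G

variable {B₀ B₁ G : R}

theorem isExactInterpolation_comm :
    IsExactInterpolation B₀ B₁ G ↔ IsExactInterpolation B₁ B₀ G :=
  ⟨fun h T h₁ h₀ => h T h₀ h₁, fun h T h₀ h₁ => h T h₁ h₀⟩

variable [StarOrderedRing R]

theorem IsExactInterpolation.star_conjugate (u : Rˣ) (h : IsExactInterpolation B₀ B₁ G) :
    IsExactInterpolation (star (u : R) * B₀ * u) (star (u : R) * B₁ * u)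
      (star (u : R) * G * u) := by
  have hsubst : ∀ S B : R, star (u : R) * (star (u * S * ↑u⁻¹) * B * (u * S * ↑u⁻¹)) * u =
      star S * (star (u : R) * B * u) * S := by
    intro S B
    have hu : star (u : R) * star (↑u⁻¹ : R) = 1 := by rw [← star_mul, u.inv_mul, star_one]
    simp only [star_mul, ← mul_assoc, hu, one_mul]
    simp only [mul_assoc, u.inv_mul, mul_one]
  intro S h₀ h₁
  simp only [← hsubst, u.isUnit.star_left_conjugate_le_conjugate_iff] at h₀ h₁ ⊢
  exact h _ h₀ h₁

theorem isExactInterpolation_star_conjugate_iff (u : Rˣ) :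
    IsExactInterpolation (star (u : R) * B₀ * u) (star (u : R) * B₁ * u) (star (u : R) * G * u) ↔
      IsExactInterpolation B₀ B₁ G := by
  refine ⟨fun h => ?_, (·.star_conjugate u)⟩
  have hu : ∀ B : R, star (↑u⁻¹ : R) * (star (u : R) * B * u) * ↑u⁻¹ = B := by
    intro B
    rw [← mul_assoc, ← mul_assoc, ← star_mul, u.mul_inv, star_one, one_mul, mul_assoc,
      u.mul_inv, mul_one]
  simpa only [hu] using h.star_conjugate u⁻¹

end StarOrderedRing

open scoped MatrixOrder

namespace Matrix

variable {n 𝕜 : Type*} [Fintype n] [DecidableEq n] [RCLike 𝕜]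

theorem PosDef.nonsing_inv_nonsing_inv {M : Matrix n n 𝕜} (hM : M.PosDef) : M⁻¹⁻¹ = M :=
  M.nonsing_inv_nonsing_inv ((isUnit_iff_isUnit_det M).mp hM.isUnit)

/-- Both inequalities are the Schur-complement forms of `0 ≤ !![M⁻¹, T; Tᴴ, M]`. -/
theorem PosDef.conjTranspose_mul_mul_le_iff {M : Matrix n n 𝕜} (hM : M.PosDef) (T : Matrix n n 𝕜) :
    Tᴴ * M * T ≤ M ↔ T * M⁻¹ * Tᴴ ≤ M⁻¹ := by
  have := hM.isUnit.invertible
  rw [le_iff, le_iff, ← hM.fromBlocks₂₂, hM.inv.fromBlocks₁₁, inv_inv_of_invertible]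

variable {B₀ B₁ G : Matrix n n 𝕜}

theorem IsExactInterpolation.nonsing_inv (h₀ : B₀.PosDef) (h₁ : B₁.PosDef) (hG : G.PosDef)
    (h : IsExactInterpolation B₀ B₁ G) : IsExactInterpolation B₀⁻¹ B₁⁻¹ G⁻¹ := by
  intro T hT₀ hT₁
  have hdual : ∀ {M : Matrix n n 𝕜}, M.PosDef →
      (star T * M⁻¹ * T ≤ M⁻¹ ↔ star (star T) * M * star T ≤ M) := fun hM => by
    rw [star_star, star_eq_conjTranspose, hM.inv.conjTranspose_mul_mul_le_iff,
      hM.nonsing_inv_nonsing_inv]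
  exact (hdual hG).2 (h _ ((hdual h₀).1 hT₀) ((hdual h₁).1 hT₁))

theorem isExactInterpolation_nonsing_inv_iff (h₀ : B₀.PosDef) (h₁ : B₁.PosDef) (hG : G.PosDef) :
    IsExactInterpolation B₀⁻¹ B₁⁻¹ G⁻¹ ↔ IsExactInterpolation B₀ B₁ G := by
  refine ⟨fun h => ?_, (·.nonsing_inv h₀ h₁ hG)⟩
  simpa only [PosDef.nonsing_inv_nonsing_inv, h₀, h₁, hG] using h.nonsing_inv h₀.inv h₁.inv hG.inv

theorem PosDef.cfc_nonsing_inv {A : Matrix n n 𝕜} (hA : A.PosDef) (f : ℝ → ℝ) :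
    cfc f A⁻¹ = cfc (fun x => f x⁻¹) A := by
  have := cfc_comp_inv f hA.isUnit.unit ((A.finite_real_spectrum.image _).continuousOn f)
  rwa [← Ring.inverse_unit, IsUnit.unit_spec, ← nonsing_inv_eq_ringInverse, eq_comm] at this

theorem PosDef.isExactInterpolation_reverse_iff {A : Matrix n n 𝕜} (hA : A.PosDef) (f : ℝ → ℝ) :
    IsExactInterpolation 1 A⁻¹ (cfc (fun x => x⁻¹ * f x) A) ↔
      IsExactInterpolation 1 A (cfc f A) := by
  have hcont (g : ℝ → ℝ) : ContinuousOn g (spectrum ℝ A) := A.finite_real_spectrum.continuousOn g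
  have hspec (x : ℝ) (hx : x ∈ spectrum ℝ A) : 0 < x := hA.isStrictlyPositive.spectrum_pos hx
  let u : (Matrix n n 𝕜)ˣ :=
    cfcUnits (fun x => (√x)⁻¹) A (fun x hx => by have := hspec x hx; positivity) (hcont _)
  have hconj (g : ℝ → ℝ) : star (u : Matrix n n 𝕜) * cfc g A * u = cfc (fun x => x⁻¹ * g x) A := by
    have hu : (u : Matrix n n 𝕜) = cfc (fun x => (√x)⁻¹) A := rfl
    rw [hu, (cfc_predicate (fun x => (√x)⁻¹) A).star_eq, ← cfc_mul _ _ A (hcont _) (hcont g),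
      ← cfc_mul _ _ A (hcont _) (hcont _)]
    refine cfc_congr fun x hx => ?_
    rw [mul_comm, ← mul_assoc, ← mul_inv, Real.mul_self_sqrt (hspec x hx).le]
  have hone : star (u : Matrix n n 𝕜) * 1 * u = A⁻¹ := by
    rw [← cfc_const_one ℝ A, hconj, nonsing_inv_eq_ringInverse,
      ← cfc_ringInverse_id (R := ℝ) A hA.isUnit]
    exact cfc_congr fun x _ => mul_one x⁻¹
  have hA' : star (u : Matrix n n 𝕜) * A * u = 1 := by
    rw [← cfc_id' ℝ A, hconj, ← cfc_const_one ℝ A]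
    exact cfc_congr fun x hx => inv_mul_cancel₀ (hspec x hx).ne'
  calc IsExactInterpolation 1 A⁻¹ (cfc (fun x => x⁻¹ * f x) A)
      ↔ IsExactInterpolation (star (u : Matrix n n 𝕜) * A * u) (star (u : Matrix n n 𝕜) * 1 * u)
          (star (u : Matrix n n 𝕜) * cfc f A * u) := by rw [hone, hA', hconj]
    _ ↔ IsExactInterpolation A 1 (cfc f A) := isExactInterpolation_star_conjugate_iff u
    _ ↔ IsExactInterpolation 1 A (cfc f A) := isExactInterpolation_comm

theorem PosDef.isExactInterpolation_dual_iff {A : Matrix n n 𝕜} (hA : A.PosDef) {f : ℝ → ℝ}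
    (hf : ∀ x ∈ spectrum ℝ A, 0 < f x) :
    IsExactInterpolation 1 A⁻¹ (cfc (fun x => (f x)⁻¹) A) ↔ IsExactInterpolation 1 A (cfc f A) := by
  have hcont : ContinuousOn f (spectrum ℝ A) := A.finite_real_spectrum.continuousOn f
  have hpos : (cfc f A).PosDef := ((cfc_isStrictlyPositive_iff f A hcont).2 hf).posDef
  rw [cfc_inv f A (fun x hx => (hf x hx).ne') hcont, ← nonsing_inv_eq_ringInverse,
    ← isExactInterpolation_nonsing_inv_iff PosDef.one hA hpos, inv_one]

end Matrix

theorem matFunCalc_eq_cfc {n : ℕ} (f : ℝ → ℝ) {A : Matrix (Fin n) (Fin n) ℂ}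
    (hA : A.IsHermitian) : matFunCalc f A = cfc f A := by
  rw [matFunCalc, dif_pos hA, hA.cfc_eq]
  rfl

theorem forall_loewnerLE_iff_isExactInterpolation {n : ℕ} (B G : Matrix (Fin n) (Fin n) ℂ) :
    (∀ T : Matrix (Fin n) (Fin n) ℂ, LoewnerLE (Tᴴ * T) 1 → LoewnerLE (Tᴴ * B * T) B →
      LoewnerLE (Tᴴ * G * T) G) ↔ IsExactInterpolation 1 B G := by
  simp only [IsExactInterpolation, mul_one]
  rfl

/-- Theorem 4.3: with `h̃(λ) = λ·h(1/λ)` and `h*(λ) = 1/h(1/λ)`,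
the conditions `h ∈ C_A`, `h̃ ∈ C_{A⁻¹}` and `h* ∈ C_{A⁻¹}` are equivalent. -/
theorem reverse_and_dual_couple (n : ℕ) (A : Matrix (Fin n) (Fin n) ℂ) (hA : A.PosDef)
    (h : ℝ → ℝ) (hpos : ∀ x : ℝ, 0 < x → 0 < h x) :
    ((∀ T : Matrix (Fin n) (Fin n) ℂ,
        LoewnerLE (Tᴴ * T) 1 → LoewnerLE (Tᴴ * A * T) A →
        LoewnerLE (Tᴴ * matFunCalc h A * T) (matFunCalc h A)) ↔
      (∀ T : Matrix (Fin n) (Fin n) ℂ,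
        LoewnerLE (Tᴴ * T) 1 → LoewnerLE (Tᴴ * A⁻¹ * T) A⁻¹ →
        LoewnerLE (Tᴴ * matFunCalc (fun l => l * h (1 / l)) A⁻¹ * T)
          (matFunCalc (fun l => l * h (1 / l)) A⁻¹))) ∧
    ((∀ T : Matrix (Fin n) (Fin n) ℂ,
        LoewnerLE (Tᴴ * T) 1 → LoewnerLE (Tᴴ * A * T) A →
        LoewnerLE (Tᴴ * matFunCalc h A * T) (matFunCalc h A)) ↔
      (∀ T : Matrix (Fin n) (Fin n) ℂ,
        LoewnerLE (Tᴴ * T) 1 → LoewnerLE (Tᴴ * A⁻¹ * T) A⁻¹ →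
        LoewnerLE (Tᴴ * matFunCalc (fun l => 1 / h (1 / l)) A⁻¹ * T)
          (matFunCalc (fun l => 1 / h (1 / l)) A⁻¹))) := by
  simp only [forall_loewnerLE_iff_isExactInterpolation, matFunCalc_eq_cfc _ hA.isHermitian,
    matFunCalc_eq_cfc _ hA.inv.isHermitian, hA.cfc_nonsing_inv, one_div, inv_inv]
  have hpos_spec (x : ℝ) (hx : x ∈ spectrum ℝ A) : 0 < h x :=
    hpos x (hA.isStrictlyPositive.spectrum_pos hx)
  exact ⟨(hA.isExactInterpolation_reverse_iff h).symm,
    (hA.isExactInterpolation_dual_iff hpos_spec).symm⟩
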